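/- arXiv:2404.18921 — 4 statements merged into one kernel-verified Lean document; each statement's English description precedes it below -/
import Mathlib

section
/- Let A be defined from g by the ansatz A_{ℓ_0,ℓ_1,...,ℓ_k} = Π_{q_1=ℓ_0+1}^{ℓ_1} Π_{q_2=ℓ_1+1}^{ℓ_2} ... Π_{q_k=ℓ_{k-1}+1}^{ℓ_k} g_{q_1,...,q_k}, where g takes values in an abelian group G_k (for k ≥ 2). Then A is locally flat: for every (k+1)-facet {ℓ_0,...,ℓ_{k+1}}, the alternating product Π_{j=0}^{k+1} (A_{ℓ_0,...,ℓ_{j-1},ℓ_{j+1},...,ℓ_{k+1}})^{(-1)^j} equals the identity. -/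
/-- The ansatz defining a gauge field `A` on facets from the independent degrees of
freedom `g` : `A_{ℓ_0,...,ℓ_k} = Π_{q_1=ℓ_0+1}^{ℓ_1} ⋯ Π_{q_k=ℓ_{k-1}+1}^{ℓ_k} g_{q_1,...,q_k}`. -/
def ansatz {G : Type*} [CommGroup G] {k : ℕ} (g : (Fin k → ℕ) → G)
    (ℓ : Fin (k+1) → ℕ) : G :=
  ∏ q ∈ Fintype.piFinset (fun i : Fin k => Finset.Ioc (ℓ i.castSucc) (ℓ i.succ)), g q

/-!
For a (k+1)-facet `ℓ`, let `C t` be the product of `g` over the box whose coordinates run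
through all gaps `(ℓ_i, ℓ_{i+1}]` except the `t`-th. Deleting the first or last vertex leaves
the box of `C 0` or `C k`. Deleting an inner vertex `ℓ_j` merges the gaps `j - 1` and `j` into
one coordinate, so that face splits as `C (j - 1) * C j`, and the alternating product telescopes.
-/

open Finset Function

namespace Fin

lemma prod_univ_succ_div_castSucc {M : Type*} [CommGroup M] {n : ℕ} (f : Fin (n + 1) → M) :
    ∏ i : Fin n, f i.succ / f i.castSucc = f (last n) / f 0 := by
  induction n with
  | zero => simp
  | succ n ih =>
    rw [prod_univ_castSucc]
    simp only [succ_castSucc]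
    have hcast := ih (f ∘ castSucc)
    simp only [comp_apply, castSucc_zero] at hcast
    rw [hcast, mul_comm, div_mul_div_cancel, succ_last]

lemma update_comp_succAbove_succ {α : Type*} {k : ℕ} (f : Fin (k + 1) → α) (m : Fin k) :
    update (f ∘ m.succ.succAbove) m (f m.succ) = f ∘ m.castSucc.succAbove := by
  ext i
  rcases lt_trichotomy i m with h | rfl | h
  · simp [update_of_ne h.ne, succAbove_succ_of_le _ _ h.le, succAbove_castSucc_of_lt _ _ h]
  · simp
  · simp [update_of_ne h.ne', succAbove_succ_of_lt _ _ h, succAbove_castSucc_of_le _ _ h.le]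

lemma prod_zpow_neg_one_pow_eq_one {G : Type*} [CommGroup G] {k : ℕ} {F : Fin (k + 2) → G}
    {C : Fin (k + 1) → G} (h₀ : F 0 = C 0) (hlast : F (last _) = C (last _))
    (hmid : ∀ m : Fin k, F m.castSucc.succ = C m.castSucc * C m.succ) :
    ∏ j, F j ^ ((-1 : ℤ) ^ (j : ℕ)) = 1 := by
  set E : Fin (k + 1) → G := fun t => C t ^ ((-1 : ℤ) ^ (t : ℕ))
  have hstep : ∀ m : Fin k, F m.castSucc.succ ^ ((-1 : ℤ) ^ ((m : ℕ) + 1)) =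
      E m.succ / E m.castSucc := by
    intro m
    simp [E, hmid, mul_zpow, pow_succ, div_eq_mul_inv, mul_comm]
  rw [prod_univ_succ, prod_univ_castSucc]
  simp only [val_succ, val_castSucc, hstep, prod_univ_succ_div_castSucc, h₀, succ_last, hlast]
  simp only [E, val_zero, val_last, pow_zero, zpow_one, pow_succ, mul_neg_one, zpow_neg]
  rw [div_mul_eq_mul_div, mul_inv_cancel, one_div, mul_inv_cancel]

end Fin

lemma Fintype.prod_piFinset_update_union {ι κ M : Type*} [DecidableEq ι] [Fintype ι]
    [DecidableEq κ] [CommMonoid M] (S : ι → Finset κ) (i : ι) {A B : Finset κ}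
    (hAB : Disjoint A B) (f : (ι → κ) → M) :
    ∏ q ∈ Fintype.piFinset (update S i (A ∪ B)), f q =
      (∏ q ∈ Fintype.piFinset (update S i A), f q) *
        ∏ q ∈ Fintype.piFinset (update S i B), f q := by
  set T := update S i (A ∪ B)
  have hA : update S i A = update T i A := by simp [T]
  have hB : update S i B = update T i B := by simp [T]
  rw [hA, hB, Fintype.piFinset_update_eq_filter_piFinset_mem T i (by simp [T]),
    Fintype.piFinset_update_eq_filter_piFinset_mem T i (by simp [T]),
    ← prod_union (disjoint_filter.mpr fun _ _ ↦ @disjoint_left.mp hAB _), ← filter_or,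
    filter_true_of_mem]
  intro q hq
  simpa [T] using Fintype.mem_piFinset.mp hq i

def gaps {k : ℕ} (ℓ : Fin (k + 1) → ℕ) (i : Fin k) : Finset ℕ :=
  Ioc (ℓ i.castSucc) (ℓ i.succ)

lemma gaps_comp_succ {k : ℕ} (ℓ : Fin (k + 2) → ℕ) :
    gaps (ℓ ∘ Fin.succ) = gaps ℓ ∘ Fin.succ := by
  ext i : 1
  simp [gaps]

lemma gaps_comp_castSucc {k : ℕ} (ℓ : Fin (k + 2) → ℕ) :
    gaps (ℓ ∘ Fin.castSucc) = gaps ℓ ∘ Fin.castSucc := by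
  ext i : 1
  simp [gaps]

lemma gaps_comp_succAbove {k : ℕ} (ℓ : Fin (k + 2) → ℕ) (m : Fin k) :
    gaps (ℓ ∘ m.castSucc.succ.succAbove) =
      update (gaps ℓ ∘ m.succ.succAbove) m (Ioc (ℓ m.castSucc.castSucc) (ℓ m.succ.succ)) := by
  ext i : 1
  have hlo : m.castSucc.succ.succAbove i.castSucc = (m.succ.succAbove i).castSucc := by
    rw [Fin.succ_castSucc, Fin.castSucc_succAbove_castSucc]
  have hhi : m.castSucc.succ.succAbove i.succ = (m.castSucc.succAbove i).succ :=
    Fin.succ_succAbove_succ _ _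
  simp only [gaps, comp_apply, hlo, hhi]
  rcases lt_trichotomy i m with h | rfl | h
  · rw [update_of_ne h.ne, comp_apply, Fin.succAbove_succ_of_le _ _ h.le,
      Fin.succAbove_castSucc_of_lt _ _ h]
    rfl
  · simp
  · rw [update_of_ne h.ne', comp_apply, Fin.succAbove_succ_of_lt _ _ h,
      Fin.succAbove_castSucc_of_le _ _ h.le]
    rfl

section

variable {G : Type*} [CommGroup G] {k : ℕ} (g : (Fin k → ℕ) → G)

lemma ansatz_eq_prod_gaps (ℓ : Fin (k + 1) → ℕ) :
    ansatz g ℓ = ∏ q ∈ Fintype.piFinset (gaps ℓ), g q :=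
  rfl

lemma ansatz_comp_succAbove_castSucc_succ {ℓ : Fin (k + 2) → ℕ} (hℓ : Monotone ℓ) (m : Fin k) :
    ansatz g (ℓ ∘ m.castSucc.succ.succAbove) =
      (∏ q ∈ Fintype.piFinset (gaps ℓ ∘ m.castSucc.succAbove), g q) *
        ∏ q ∈ Fintype.piFinset (gaps ℓ ∘ m.succ.succAbove), g q := by
  have hsplit :
      Ioc (ℓ m.castSucc.castSucc) (ℓ m.succ.succ) = gaps ℓ m.castSucc ∪ gaps ℓ m.succ :=
    (Ioc_union_Ioc_eq_Ioc (hℓ (by simp [Fin.le_def])) (hℓ (by simp [Fin.le_def]))).symm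
  have hdisj : Disjoint (gaps ℓ m.castSucc) (gaps ℓ m.succ) := Ioc_disjoint_Ioc_of_le le_rfl
  rw [ansatz_eq_prod_gaps, gaps_comp_succAbove, hsplit,
    Fintype.prod_piFinset_update_union _ _ hdisj, Fin.update_comp_succAbove_succ, mul_comm,
    update_eq_self_iff.mpr (by simp)]

end

theorem ansatz_locally_flat_general {G : Type*} [CommGroup G] (k : ℕ)
    (g : (Fin k → ℕ) → G) (ℓ : Fin (k+2) → ℕ) (hmono : StrictMono ℓ) :
    ∏ j : Fin (k+2), (ansatz g (ℓ ∘ j.succAbove)) ^ ((-1 : ℤ) ^ (j : ℕ)) = 1 := by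
  refine Fin.prod_zpow_neg_one_pow_eq_one
    (C := fun t => ∏ q ∈ Fintype.piFinset (gaps ℓ ∘ t.succAbove), g q) ?_ ?_
    (ansatz_comp_succAbove_castSucc_succ g hmono.monotone)
  · simp only [ansatz_eq_prod_gaps, Fin.succAbove_zero, gaps_comp_succ]
  · simp only [ansatz_eq_prod_gaps, Fin.succAbove_last, gaps_comp_castSucc]

/-- the ansatz is locally flat: for every (k+1)-facet `ℓ_0 < ... < ℓ_{k+1}`,
the alternating product `Π_{j=0}^{k+1} A_{ℓ_0,...,ℓ_{j-1},ℓ_{j+1},...,ℓ_{k+1}}^{(-1)^j}`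
is the identity. -/
theorem ansatz_locally_flat {G : Type*} [CommGroup G] (k n : ℕ)
    (g : (Fin k → ℕ) → G) (ℓ : Fin (k+2) → ℕ) (hmono : StrictMono ℓ)
    (hbound : ∀ j, ℓ j ≤ n) :
    ∏ j : Fin (k+2), (ansatz g (ℓ ∘ j.succAbove)) ^ ((-1 : ℤ) ^ (j : ℕ)) = 1 :=
  ansatz_locally_flat_general k g ℓ hmono
end

section
/- Let m be an even positive integer, H an abelian group, M an abelian group. A function c : H → M satisfies c(g_1) - c(g_2 g_1) + c(g_3 g_2) - ... + (-1)^m c(g_{m+1} g_m) + (-1)^{m+1} c(g_{m+1}) = 0 for all g_1,...,g_{m+1} ∈ H if and only if c differs from a group homomorphism H → M by a constant function. -/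
/-!
Writing `p` for the sequence `1, g_1, …, g_{m+1}, 1`, every argument of the alternating sum is a
product `p_{j+1} p_j`. For a homomorphism `φ` the sum therefore telescopes to `φ 1 - φ 1 = 0`, and
since the sum has an even number `m + 2` of terms with alternating signs, adding a constant to `c`
does not change it.
Conversely, once `c` is normalised by `c 1 = 0`, the choice `g = (a, b, 1, …, 1)` turns the
condition into `c a - c (b a) + c b = 0`.
-/

open Finset

/-- The `j`-th argument (0 ≤ j ≤ m+1) occurring in the alternating cocycle condition
`c(g_1) - c(g_2 g_1) + c(g_3 g_2) - ⋯ + (-1)^m c(g_{m+1} g_m) + (-1)^{m+1} c(g_{m+1}) = 0`,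
where `g : Fin (m+1) → H` lists `g_1, …, g_{m+1}`. -/
def altTerm {H : Type*} [CommGroup H] (m : ℕ) (g : Fin (m+1) → H) (j : ℕ) : H :=
  if h0 : j = 0 then g ⟨0, Nat.succ_pos m⟩
  else if hm : j ≤ m then g ⟨j, Nat.lt_succ_of_le hm⟩ * g ⟨j - 1, by omega⟩
  else g ⟨m, Nat.lt_succ_self m⟩

theorem sum_range_neg_one_pow_smul_add_succ {M : Type*} [AddCommGroup M] (f : ℕ → M) (n : ℕ) :
    ∑ j ∈ range n, ((-1 : ℤ) ^ j) • (f (j + 1) + f j) = f 0 - ((-1 : ℤ) ^ n) • f n := by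
  have htel := sum_range_sub' (fun j => ((-1 : ℤ) ^ j) • f j) n
  rw [pow_zero, one_smul] at htel
  rw [← htel]
  refine sum_congr rfl fun j _ => ?_
  rw [pow_succ, mul_neg_one, neg_smul, sub_neg_eq_add, smul_add, add_comm]

section AltSum

variable {H M : Type*} [CommGroup H] [AddCommGroup M] {m : ℕ}

def altSum (m : ℕ) (c : H → M) (g : Fin (m + 1) → H) : M :=
  ∑ j ∈ range (m + 2), ((-1 : ℤ) ^ j) • c (altTerm m g j)

/-- The sequence `1, g_1, …, g_{m+1}, 1, 1, …`. -/
def paddedSeq (g : Fin (m + 1) → H) (j : ℕ) : H :=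
  if h : 1 ≤ j ∧ j ≤ m + 1 then g ⟨j - 1, by omega⟩ else 1

theorem altTerm_eq_paddedSeq_mul (g : Fin (m + 1) → H) {j : ℕ} (hj : j ≤ m + 1) :
    altTerm m g j = paddedSeq g (j + 1) * paddedSeq g j := by
  unfold altTerm paddedSeq
  split_ifs <;> first | omega | simp_all
  obtain rfl : j = m + 1 := by omega
  rfl

theorem altSum_add_const (heven : Even m) (c : H → M) (k : M) (g : Fin (m + 1) → H) :
    altSum m (fun h => c h + k) g = altSum m c g := by
  have hsigns : ∑ j ∈ range (m + 2), (-1 : ℤ) ^ j = 0 := by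
    rw [neg_one_geom_sum, if_pos (heven.add even_two)]
  simp only [altSum, smul_add, sum_add_distrib, ← sum_smul, hsigns, zero_smul, add_zero]

theorem altSum_eq_zero_of_map_mul {φ : H → M} (hφ : ∀ a b, φ (a * b) = φ a + φ b)
    (g : Fin (m + 1) → H) : altSum m φ g = 0 := by
  have hφ1 : φ 1 = 0 := by simpa using hφ 1 1
  calc altSum m φ g
      = ∑ j ∈ range (m + 2),
          ((-1 : ℤ) ^ j) • (φ (paddedSeq g (j + 1)) + φ (paddedSeq g j)) := by
        refine sum_congr rfl fun j hj => ?_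
        rw [altTerm_eq_paddedSeq_mul g (Nat.lt_succ_iff.mp (mem_range.mp hj)), hφ]
    _ = 0 := by
        rw [sum_range_neg_one_pow_smul_add_succ (fun j => φ (paddedSeq g j))]
        simp [paddedSeq, hφ1]

def pairThenOnes (m : ℕ) (a b : H) (i : Fin (m + 1)) : H :=
  if i.val = 0 then a else if i.val = 1 then b else 1

theorem altSum_pairThenOnes (hm : 0 < m) {c : H → M} (hc1 : c 1 = 0) (a b : H) :
    altSum m c (pairThenOnes m a b) = c a - c (b * a) + c b := by
  have hpad : ∀ j, 3 ≤ j → paddedSeq (pairThenOnes m a b) j = 1 := by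
    intro j hj
    simp only [paddedSeq, pairThenOnes]
    split_ifs <;> first | rfl | omega
  have htail : ∀ j ∈ range (m + 2), j ∉ range 3 →
      ((-1 : ℤ) ^ j) • c (altTerm m (pairThenOnes m a b) j) = 0 := by
    intro j hj hj3
    simp only [mem_range, not_lt] at hj hj3
    rw [altTerm_eq_paddedSeq_mul _ (by omega), hpad j hj3, hpad (j + 1) (by omega), mul_one, hc1,
      smul_zero]
  rw [altSum, ← sum_subset (range_subset_range.mpr (by omega)) htail]
  have hm1 : 1 ≤ m := hm
  simp [sum_range_succ, altTerm_eq_paddedSeq_mul, paddedSeq, pairThenOnes, hm1, sub_eq_add_neg]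

end AltSum

/-- for even positive `m`, a function `c : H → M` satisfies the alternating
condition for all `g_1,…,g_{m+1} ∈ H` iff `c` differs from a group homomorphism `H → M`
by a constant. -/
theorem alt_condition_iff_hom_add_const_of_even {H M : Type*} [CommGroup H] [AddCommGroup M]
    (m : ℕ) (hm : 0 < m) (heven : Even m) (c : H → M) :
    (∀ g : Fin (m+1) → H,
        ∑ j ∈ Finset.range (m+2), ((-1 : ℤ)^j) • c (altTerm m g j) = 0) ↔
    (∃ (φ : H → M) (k : M), (∀ a b : H, φ (a * b) = φ a + φ b) ∧ ∀ h : H, c h = φ h + k) := by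
  constructor
  · intro hc
    refine ⟨fun h => c h + -c 1, c 1, fun a b => ?_, fun h => (neg_add_cancel_right _ _).symm⟩
    have hnorm := altSum_pairThenOnes hm (c := fun h => c h + -c 1) (add_neg_cancel _) a b
    rw [altSum_add_const heven, show altSum m c _ = 0 from hc _] at hnorm
    rw [mul_comm a b]
    linear_combination (norm := module) hnorm
  · rintro ⟨φ, k, hφ, hck⟩ g
    rw [funext hck]
    exact (altSum_add_const heven φ k g).trans (altSum_eq_zero_of_map_mul hφ g)
end

section
/- If G is an extended group such that G_k is trivial for all k < m, then the n-th extended group cohomology H^n(G,M) vanishes for all n < m, and H^m(G,M) is isomorphic to the group Hom_Z(G_m, M) of group homomorphisms from G_m to M. -/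
/-- `Idx n k` : strictly increasing k-tuples in {1,...,n}, i.e. the set [n:k]. -/
def Idx (n k : ℕ) : Type := {q : Fin k → ℕ // StrictMono q ∧ ∀ i, 1 ≤ q i ∧ q i ≤ n}

/-- shift entries ≥ j up by one -/
def up (j t : ℕ) : ℕ := if t < j then t else t + 1

/-- shift entries > j up by one -/
def up' (j t : ℕ) : ℕ := if t ≤ j then t else t + 1

lemma up_strictMono (j : ℕ) : StrictMono (up j) := by
  intro a b h; unfold up; split_ifs <;> omega

lemma up'_strictMono (j : ℕ) : StrictMono (up' j) := by
  intro a b h; unfold up'; split_ifs <;> omega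

/-- The face maps `∂_j : H^{[n:k]} → H^{[n-1:k]}`. -/
def faceMap {H : Type*} [Monoid H] (n k j : ℕ) (h : Idx n k → H) : Idx (n-1) k → H :=
  fun q =>
    if ∃ i, q.1 i = j then
      h ⟨up' j ∘ q.1, (up'_strictMono j).comp q.2.1, fun i => by
        have h1 := (q.2.2 i).1; have h2 := (q.2.2 i).2
        simp only [Function.comp_apply]; unfold up'; split_ifs <;> omega⟩ *
      h ⟨up j ∘ q.1, (up_strictMono j).comp q.2.1, fun i => by
        have h1 := (q.2.2 i).1; have h2 := (q.2.2 i).2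
        simp only [Function.comp_apply]; unfold up; split_ifs <;> omega⟩
    else
      h ⟨up j ∘ q.1, (up_strictMono j).comp q.2.1, fun i => by
        have h1 := (q.2.2 i).1; have h2 := (q.2.2 i).2
        simp only [Function.comp_apply]; unfold up; split_ifs <;> omega⟩

/-- `M`-valued `n`-cochains on an extended group `G` : functions on
`Π_{k=1}^{n} G_k^{[n:k]}`. -/
abbrev ExtCochain (G : ℕ → Type) [∀ k, Group (G k)] (M : Type) (n : ℕ) : Type :=
  ((k : Fin n) → Idx n (k.1 + 1) → G (k.1 + 1)) → M

/-- The extended-group differential `d_n : C^n(G,M) → C^{n+1}(G,M)`,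
`(d_n c)(g) = Σ_{j=0}^{n+1} (-1)^j c(∂_j g)`. -/
def extD (G : ℕ → Type) [∀ k, Group (G k)] (M : Type) [AddCommGroup M] (n : ℕ)
    (c : ExtCochain G M n) : ExtCochain G M (n+1) :=
  fun g => ∑ j ∈ Finset.range (n+2), ((-1 : ℤ)^j) •
    c (fun k => faceMap (n+1) (k.1+1) j (g ⟨k.1, Nat.lt_succ_of_lt k.2⟩))

/-- The differential as an additive homomorphism. -/
def extDhom (G : ℕ → Type) [∀ k, Group (G k)] (M : Type) [AddCommGroup M] (n : ℕ) :
    ExtCochain G M n →+ ExtCochain G M (n+1) where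
  toFun := extD G M n
  map_zero' := by funext g; simp [extD]
  map_add' := by
    intro a b; funext g
    simp only [extD, Pi.add_apply, smul_add]
    rw [Finset.sum_add_distrib]

/-- Extended group cohomology `H^{n+1}(G,M) = ker d_{n+1} / im d_n`. -/
abbrev ExtCoh (G : ℕ → Type) [∀ k, Group (G k)] (M : Type) [AddCommGroup M] (n : ℕ) : Type :=
  AddMonoidHom.ker (extDhom G M (n+1)) ⧸
    ((AddMonoidHom.range (extDhom G M n)).addSubgroupOf (AddMonoidHom.ker (extDhom G M (n+1))))

/-!
If `G_k` is trivial for `k ≤ n`, the domain of `n`-cochains is a single point, so cochains are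
constants and `d_n` multiplies a constant by `∑_{j ≤ n+1} (-1)^j`, which is `0` or `1` according
to the parity of `n`. Hence every constant `(n+1)`-cocycle is a coboundary; this kills `H^{n+1}`
as soon as `G_{n+1}` is trivial as well.

In degree `n+1` a cochain is a function `u` on `G_{n+1}`. Evaluating the cocycle condition at a
point whose top component is `y` on the face missing `1`, `x` on the face missing `2` and `1`
elsewhere gives `u (x * y) = u x + u y - u 1`. So `c ↦ u - u 1` maps cocycles to
`Hom(G_{n+1}, M)`; it is onto because homomorphisms are cocycles (the alternating sum
telescopes), and its kernel, the constant cocycles, is the group of coboundaries.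
-/

namespace Idx

lemma range_eq_Icc {m : ℕ} (q : Idx m m) : Set.range q.1 = Set.Icc 1 m := by
  have himage : Finset.univ.image q.1 = Finset.Icc 1 m := by
    refine Finset.eq_of_subset_of_card_le (fun t ht => ?_) ?_
    · obtain ⟨i, -, rfl⟩ := Finset.mem_image.mp ht
      exact Finset.mem_Icc.mpr (q.2.2 i)
    · simp [Finset.card_image_of_injective _ q.2.1.injective]
  simpa using congrArg (fun s : Finset ℕ => (s : Set ℕ)) himage

instance (m : ℕ) : Subsingleton (Idx m m) :=
  ⟨fun q q' => Subtype.ext <| (q.2.1.range_inj q'.2.1).mp <| by rw [range_eq_Icc, range_eq_Icc]⟩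

def full (m : ℕ) : Idx m m :=
  ⟨fun i => i.1 + 1, fun _ _ h => Nat.succ_lt_succ h, fun i => ⟨Nat.succ_pos _, i.2⟩⟩

/-- `skip n j = {1, …, n+1} \ {j}` for `1 ≤ j ≤ n+1`. -/
def skip (n j : ℕ) : Idx (n + 1) n :=
  ⟨fun i => up j (i.1 + 1), (up_strictMono j).comp fun _ _ h => Nat.succ_lt_succ h,
    fun i => by have := i.2; simp only [up]; split_ifs <;> omega⟩

lemma skip_ne_skip {n j j' : ℕ} (hj : 1 ≤ j) (hjj' : j < j') (hj' : j' ≤ n + 1) :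
    skip n j ≠ skip n j' := fun h => by
  have hpos := congrFun (congrArg Subtype.val h) ⟨j - 1, by omega⟩
  simp only [skip, up] at hpos
  split_ifs at hpos <;> omega

end Idx

def skipValue {H : Type*} [One H] {n : ℕ} (h : Idx (n + 1) n → H) (j : ℕ) : H :=
  if 1 ≤ j ∧ j ≤ n + 1 then h (Idx.skip n j) else 1

lemma faceMap_full {H : Type*} [Monoid H] {n j : ℕ} (h : Idx (n + 1) n → H) (hj : j ≤ n + 1) :
    faceMap (n + 1) n j h (Idx.full n) = skipValue h (j + 1) * skipValue h j := by
  have hskip : ∀ {f : ℕ → ℕ} {j' : ℕ} (hf : ∀ i < n, f (i + 1) = up j' (i + 1)) hq,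
      h ⟨f ∘ (Idx.full n).1, hq⟩ = h (Idx.skip n j') := fun hf _ =>
    congrArg h <| Subtype.ext <| funext fun i => hf i i.2
  unfold faceMap skipValue
  by_cases hmem : ∃ i : Fin n, (Idx.full n).1 i = j
  · obtain ⟨i, hi⟩ := hmem
    have hji : j = i.1 + 1 := hi.symm
    rw [if_pos ⟨i, hi⟩, if_pos (by omega), if_pos (by omega),
      hskip (j' := j + 1) (fun _ _ => by simp only [up, up']; split_ifs <;> omega),
      hskip (fun _ _ => rfl)]
  · have hj' : j = 0 ∨ j = n + 1 := by
      by_contra! hne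
      exact hmem ⟨⟨j - 1, by omega⟩, show j - 1 + 1 = j by omega⟩
    rw [if_neg hmem]
    rcases hj' with rfl | rfl
    · rw [if_pos (by omega), if_neg (by omega), mul_one,
        hskip (j' := 1) (fun _ _ => by simp only [up]; split_ifs <;> omega)]
    · rw [if_neg (by omega), if_pos (by omega), one_mul, hskip (fun _ _ => rfl)]

lemma Finset.sum_range_neg_one_pow_smul_add {M : Type*} [AddCommGroup M] (F : ℕ → M) (N : ℕ) :
    ∑ j ∈ Finset.range N, (-1 : ℤ) ^ j • (F (j + 1) + F j)
      = F 0 - (-1 : ℤ) ^ N • F N := by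
  have hstep : ∀ j, (-1 : ℤ) ^ j • (F (j + 1) + F j)
      = (-1 : ℤ) ^ j • F j - (-1 : ℤ) ^ (j + 1) • F (j + 1) := fun j => by
    rw [pow_succ, mul_neg_one, neg_smul, sub_neg_eq_add, smul_add, add_comm]
  rw [Finset.sum_congr rfl fun j _ => hstep j, Finset.sum_range_sub', pow_zero, one_smul]

abbrev ExtPoint (G : ℕ → Type) [∀ k, Group (G k)] (n : ℕ) : Type :=
  (k : Fin n) → Idx n (k.1 + 1) → G (k.1 + 1)

section

variable {G : ℕ → Type} [∀ k, Group (G k)] {M : Type} [AddCommGroup M] {n : ℕ}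

lemma subsingleton_extPoint (ht : ∀ k ≤ n, ∀ a : G k, a = 1) : Subsingleton (ExtPoint G n) :=
  ⟨fun _ _ => funext fun k => funext fun _ => (ht _ k.2 _).trans (ht _ k.2 _).symm⟩

lemma extDhom_apply (c : ExtCochain G M n) : extDhom G M n c = extD G M n c := rfl

lemma extD_apply_of_forall_eq {c : ExtCochain G M n} (hc : ∀ g g', c g = c g')
    (g : ExtPoint G (n + 1)) (x : ExtPoint G n) :
    extD G M n c g = if Even n then 0 else c x := by
  rw [extD, Finset.sum_congr rfl fun j _ => by rw [hc _ x], ← Finset.sum_smul, neg_one_geom_sum]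
  simp [Nat.even_add]

lemma mem_range_extDhom_of_forall_eq {c : ExtCochain G M (n + 1)} (hc : ∀ g g', c g = c g')
    (hcoc : extDhom G M (n + 1) c = 0) : c ∈ (extDhom G M n).range := by
  let x : ExtPoint G (n + 1) := fun _ _ => 1
  rcases Nat.even_or_odd n with hn | hn
  · have hcx : c x = 0 := by
      simpa [extDhom_apply, extD_apply_of_forall_eq hc (fun _ _ => 1) x, Nat.even_add_one, hn]
        using congrFun hcoc fun _ _ => 1
    exact ⟨0, funext fun g => by rw [map_zero, hc g x, hcx]; rfl⟩
  · refine ⟨fun _ => c x, funext fun g => ?_⟩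
    rw [extDhom_apply, extD_apply_of_forall_eq (fun _ _ => rfl) g (fun _ _ => 1),
      if_neg (Nat.not_even_iff_odd.mpr hn), hc]

lemma subsingleton_extCoh (ht : ∀ k ≤ n + 1, ∀ a : G k, a = 1) :
    Subsingleton (ExtCoh G M n) := by
  have := subsingleton_extPoint ht
  refine subsingleton_of_forall_eq 0 fun y => ?_
  obtain ⟨c, rfl⟩ := QuotientAddGroup.mk_surjective y
  rw [QuotientAddGroup.eq_zero_iff, AddSubgroup.mem_addSubgroupOf]
  exact mem_range_extDhom_of_forall_eq (fun g g' => congrArg c.1 (Subsingleton.elim g g')) c.2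

end

section

variable {G : ℕ → Type} [∀ k, Group (G k)] {M : Type} [AddCommGroup M] {n : ℕ}

def topEquiv (ht : ∀ k ≤ n, ∀ a : G k, a = 1) : ExtPoint G (n + 1) ≃ G (n + 1) where
  toFun g := g (Fin.last n) (Idx.full (n + 1))
  invFun a := Function.update 1 (Fin.last n) fun _ => a
  left_inv g := by
    funext k q
    rcases Fin.eq_castSucc_or_eq_last k with ⟨i, rfl⟩ | rfl
    · exact (ht _ i.2 _).trans (ht _ i.2 _).symm
    · dsimp only
      rw [Function.update_self, Subsingleton.elim (α := Idx (n + 1) (n + 1)) q (Idx.full _)]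
  right_inv a := by simp

lemma extD_comp_topEquiv (ht : ∀ k ≤ n, ∀ a : G k, a = 1) (u : G (n + 1) → M)
    (g : ExtPoint G (n + 2)) :
    extD G M (n + 1) (u ∘ topEquiv ht) g = ∑ j ∈ Finset.range (n + 3),
      (-1 : ℤ) ^ j •
        u (skipValue (g (Fin.last n).castSucc) (j + 1) * skipValue (g (Fin.last n).castSucc) j) :=
  Finset.sum_congr rfl fun j hj => by
    rw [Function.comp_apply, ← faceMap_full _ (Nat.lt_succ_iff.mp (Finset.mem_range.mp hj))]
    rfl

lemma extD_addMonoidHom_comp_topEquiv (ht : ∀ k ≤ n, ∀ a : G k, a = 1)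
    (f : Additive (G (n + 1)) →+ M) :
    extD G M (n + 1) ((f ∘ Additive.ofMul) ∘ topEquiv ht) = 0 := by
  funext g
  rw [extD_comp_topEquiv]
  simp only [Function.comp_apply, ofMul_mul, map_add]
  rw [Finset.sum_range_neg_one_pow_smul_add (fun j => f (Additive.ofMul (skipValue _ j)))]
  simp [skipValue]

lemma map_mul_of_extD_comp_topEquiv_eq_zero (ht : ∀ k ≤ n, ∀ a : G k, a = 1)
    {u : G (n + 1) → M} (hu : extD G M (n + 1) (u ∘ topEquiv ht) = 0) (x y : G (n + 1)) :
    u (x * y) = u x + u y - u 1 := by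
  classical
  have hrel : ∀ x y, u (x * y) = u x + u y - if Even n then 0 else u 1 := by
    intro x y
    let h := Function.update (Function.update (1 : Idx (n + 2) (n + 1) → G (n + 1))
      (Idx.skip (n + 1) 2) x) (Idx.skip (n + 1) 1) y
    have h0 : skipValue h 0 = 1 := rfl
    have h1 : skipValue h 1 = y := by simp [h, skipValue]
    have h2 : skipValue h 2 = x := by
      simp only [h, skipValue]
      rw [if_pos (by omega),
        Function.update_of_ne (Idx.skip_ne_skip le_rfl one_lt_two (by omega)).symm,
        Function.update_self]
    have hge : ∀ j, 3 ≤ j → skipValue h j = 1 := fun j hj => by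
      by_cases hjn : j ≤ n + 2
      · simp only [h, skipValue]
        rw [if_pos (by omega),
          Function.update_of_ne (Idx.skip_ne_skip le_rfl (by omega) hjn).symm,
          Function.update_of_ne (Idx.skip_ne_skip (j := 2) (by omega) (by omega) hjn).symm]
        rfl
      · simp [skipValue, hjn]
    have hsum := congrFun hu (Function.update 1 (Fin.last n).castSucc h)
    rw [extD_comp_topEquiv, Function.update_self] at hsum
    have hge' : ∀ i, skipValue h (i + 1 + 1 + 1) = 1 := fun i => hge _ (by omega)
    simp only [Finset.sum_range_succ', h0, h1, h2, hge', mul_one, one_mul, Pi.zero_apply] at hsum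
    have htail : ∑ i ∈ Finset.range n, (-1 : ℤ) ^ (i + 1 + 1 + 1) • u 1
        = -if Even n then 0 else u 1 := by
      simp only [pow_succ, ← Finset.sum_mul, ← Finset.sum_smul, neg_one_geom_sum]
      split_ifs <;> simp
    rw [htail] at hsum
    generalize (if Even n then 0 else u 1) = e at hsum ⊢
    rw [← sub_eq_zero, ← neg_eq_zero, ← hsum]
    simp only [zero_add, pow_zero, pow_one, one_smul, neg_smul]
    abel
  have hunit : (if Even n then 0 else u 1) = u 1 :=
    add_left_cancel (eq_sub_iff_add_eq.mp (by simpa only [mul_one] using hrel 1 1))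
  rw [hrel, hunit]

def cocycleToHom (ht : ∀ k ≤ n, ∀ a : G k, a = 1) :
    (extDhom G M (n + 1)).ker →+ (Additive (G (n + 1)) →+ M) :=
  AddMonoidHom.mk'
    (fun c => AddMonoidHom.mk'
      (fun a => c.1 ((topEquiv ht).symm a.toMul) - c.1 ((topEquiv ht).symm 1))
      fun a b => by
        have hu : extD G M (n + 1) ((c.1 ∘ (topEquiv ht).symm) ∘ topEquiv ht) = 0 := by
          rw [Function.comp_assoc, Equiv.symm_comp_self, Function.comp_id]
          exact c.2
        have := map_mul_of_extD_comp_topEquiv_eq_zero ht hu a.toMul b.toMul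
        simp only [Function.comp_apply] at this
        rw [toMul_add, this]
        abel)
    fun c d => AddMonoidHom.ext fun a => by
      simp only [AddMonoidHom.mk'_apply, AddSubgroup.coe_add, Pi.add_apply,
        AddMonoidHom.add_apply]
      abel

lemma cocycleToHom_surjective (ht : ∀ k ≤ n, ∀ a : G k, a = 1) :
    Function.Surjective (cocycleToHom (M := M) ht) := fun f => by
  refine ⟨⟨(f ∘ Additive.ofMul) ∘ topEquiv ht, extD_addMonoidHom_comp_topEquiv ht f⟩,
    AddMonoidHom.ext fun a => ?_⟩
  simp [cocycleToHom]

lemma cocycleToHom_eq_zero_iff (ht : ∀ k ≤ n, ∀ a : G k, a = 1)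
    (c : (extDhom G M (n + 1)).ker) :
    cocycleToHom ht c = 0 ↔ ∀ g g', c.1 g = c.1 g' := by
  refine ⟨fun hc g g' => ?_, fun hc => AddMonoidHom.ext fun a => sub_eq_zero.mpr (hc _ _)⟩
  have hconst : ∀ a, c.1 ((topEquiv ht).symm a) = c.1 ((topEquiv ht).symm 1) := fun a =>
    sub_eq_zero.mp (DFunLike.congr_fun hc (Additive.ofMul a))
  rw [← (topEquiv ht).symm_apply_apply g, ← (topEquiv ht).symm_apply_apply g']
  exact (hconst _).trans (hconst _).symm

lemma ker_cocycleToHom (ht : ∀ k ≤ n, ∀ a : G k, a = 1) :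
    (cocycleToHom (M := M) ht).ker
      = (extDhom G M n).range.addSubgroupOf (extDhom G M (n + 1)).ker := by
  have := subsingleton_extPoint ht
  ext c
  rw [AddMonoidHom.mem_ker, cocycleToHom_eq_zero_iff, AddSubgroup.mem_addSubgroupOf]
  refine ⟨fun hc => mem_range_extDhom_of_forall_eq hc c.2, ?_⟩
  rintro ⟨b, hb⟩ g g'
  have hb_const : ∀ x x', b x = b x' := fun x x' => congrArg b (Subsingleton.elim x x')
  rw [← hb, extDhom_apply, extD_apply_of_forall_eq hb_const g (fun _ _ => 1),
    extD_apply_of_forall_eq hb_const g' (fun _ _ => 1)]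

noncomputable def extCohEquiv (ht : ∀ k ≤ n, ∀ a : G k, a = 1) :
    ExtCoh G M n ≃+ (Additive (G (n + 1)) →+ M) :=
  (QuotientAddGroup.quotientAddEquivOfEq (ker_cocycleToHom ht).symm).trans
    (QuotientAddGroup.quotientKerEquivOfSurjective _ (cocycleToHom_surjective ht))

end

theorem extCoh_of_trivial_below_general (G : ℕ → Type) [∀ k, Group (G k)]
    (M : Type) [AddCommGroup M] (m : ℕ) (hm : 0 < m)
    (htriv : ∀ k, k < m → ∀ a : G k, a = 1) :
    (∀ n : ℕ, n + 1 < m → Subsingleton (ExtCoh G M n)) ∧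
    Nonempty (ExtCoh G M (m-1) ≃+ (Additive (G m) →+ M)) := by
  refine ⟨fun n hn => subsingleton_extCoh fun k hk => htriv k (by omega), ?_⟩
  obtain ⟨n, rfl⟩ : ∃ n, m = n + 1 := ⟨m - 1, by omega⟩
  exact ⟨extCohEquiv fun k hk => htriv k (by omega)⟩

/-- if `G_k` is trivial for all `k < m`, then `H^n(G,M) = 0` for `1 ≤ n < m`,
and `H^m(G,M) ≅ Hom_ℤ(G_m, M)`. -/
theorem extCoh_of_trivial_below (G : ℕ → Type) [∀ k, Group (G k)]
    (hab : ∀ k, 1 < k → ∀ a b : G k, a * b = b * a)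
    (N : ℕ) (htrivN : ∀ k, N < k → ∀ a : G k, a = 1)
    (M : Type) [AddCommGroup M] (m : ℕ) (hm : 0 < m)
    (htriv : ∀ k, k < m → ∀ a : G k, a = 1) :
    (∀ n : ℕ, n + 1 < m → Subsingleton (ExtCoh G M n)) ∧
    Nonempty (ExtCoh G M (m-1) ≃+ (Additive (G m) →+ M)) :=
  extCoh_of_trivial_below_general G M m hm htriv
end

section
/- In the simplicial set K(H,m), for n > m, every element h ∈ H^{[n:m]} all of whose faces δ_j h (for 0 ≤ j ≤ n) are trivial must itself be trivial (all components equal to 1). Hence the set Z_n of based n-spheres of K(H,m) contains only the degenerate basepoint for n > m. -/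
/-!
Induct on the weight `∑ i, q i` of an index tuple `q ∈ [n:m]`. Since `m < n`, some
`j ∈ {1, …, n}` is missing from `q`, so `q` is the `j`-th shift of a tuple `p ∈ [n-1:m]`.
The face `∂_j h` at `p` is either `h q` or `h q' * h q`, where `q'` is `q` with the entry
`j + 1` lowered to `j`, a tuple of smaller weight; in both cases `∂_j h = 1` forces `h q = 1`.
-/

namespace Idx

variable {n k : ℕ}

def weight (q : Idx n k) : ℕ := ∑ i, q.1 i

def shiftUp (j : ℕ) (p : Idx (n - 1) k) : Idx n k :=
  ⟨up j ∘ p.1, (up_strictMono j).comp p.2.1, fun i => by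
    have := (p.2.2 i).1; have := (p.2.2 i).2
    simp only [Function.comp_apply]; unfold up; split_ifs <;> omega⟩

def shiftUp' (j : ℕ) (p : Idx (n - 1) k) : Idx n k :=
  ⟨up' j ∘ p.1, (up'_strictMono j).comp p.2.1, fun i => by
    have := (p.2.2 i).1; have := (p.2.2 i).2
    simp only [Function.comp_apply]; unfold up'; split_ifs <;> omega⟩

def shiftDown (j : ℕ) (q : Idx n k) (hj : 1 ≤ j) (hjn : j ≤ n) (hq : ∀ i, q.1 i ≠ j) :
    Idx (n - 1) k :=
  ⟨fun i => if q.1 i ≤ j then q.1 i else q.1 i - 1,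
    fun a b hab => by
      have := q.2.1 hab; have := hq a; have := hq b; have := (q.2.2 a).1
      dsimp only; split_ifs <;> omega,
    fun i => by
      have := hq i; have := (q.2.2 i).1; have := (q.2.2 i).2
      dsimp only; split_ifs <;> omega⟩

theorem shiftUp_shiftDown (j : ℕ) (q : Idx n k) (hj : 1 ≤ j) (hjn : j ≤ n)
    (hq : ∀ i, q.1 i ≠ j) : shiftUp j (shiftDown j q hj hjn hq) = q := by
  apply Subtype.ext
  funext i
  have := hq i; have := (q.2.2 i).1
  simp only [shiftUp, shiftDown, Function.comp_apply, up]
  split_ifs <;> omega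

theorem weight_shiftUp'_lt (j : ℕ) (p : Idx (n - 1) k) (hj : ∃ i, p.1 i = j) :
    (shiftUp' j p).weight < (shiftUp j p).weight := by
  obtain ⟨i₀, hi₀⟩ := hj
  refine Finset.sum_lt_sum (fun i _ => ?_) ⟨i₀, Finset.mem_univ _, ?_⟩
  · simp only [shiftUp, shiftUp', Function.comp_apply, up, up']
    split_ifs <;> omega
  · simp [shiftUp, shiftUp', up, up', hi₀]

theorem exists_forall_ne_of_lt (hkn : k < n) (q : Idx n k) :
    ∃ j, 1 ≤ j ∧ j ≤ n ∧ ∀ i, q.1 i ≠ j := by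
  have hcard : (Finset.univ.image q.1).card < (Finset.Icc 1 n).card := by
    calc (Finset.univ.image q.1).card ≤ k := by
          simpa using Finset.card_image_le (f := q.1) (s := Finset.univ)
      _ < (Finset.Icc 1 n).card := by simpa using hkn
  obtain ⟨j, hjn, hjq⟩ := Finset.exists_mem_notMem_of_card_lt_card hcard
  rw [Finset.mem_Icc] at hjn
  exact ⟨j, hjn.1, hjn.2, fun i hi => hjq (Finset.mem_image.2 ⟨i, Finset.mem_univ _, hi⟩)⟩

end Idx

theorem faceMap_apply {H : Type*} [Monoid H] (n k j : ℕ) (h : Idx n k → H) (p : Idx (n - 1) k) :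
    faceMap n k j h p =
      if ∃ i, p.1 i = j then h (p.shiftUp' j) * h (p.shiftUp j) else h (p.shiftUp j) :=
  rfl

theorem eq_one_of_faceMap_eq_one {H : Type*} [Group H] {n k j : ℕ} {h : Idx n k → H}
    {p : Idx (n - 1) k} (hface : faceMap n k j h p = 1)
    (hlower : ∀ q : Idx n k, q.weight < (p.shiftUp j).weight → h q = 1) :
    h (p.shiftUp j) = 1 := by
  rw [faceMap_apply] at hface
  split_ifs at hface with hj
  · rwa [hlower _ (Idx.weight_shiftUp'_lt j p hj), one_mul] at hface
  · exact hface

theorem KHm_spheres_trivial_general {H : Type*} [Group H] (m n : ℕ) (hmn : m < n)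
    (h : Idx n m → H)
    (hface : ∀ j, j ≤ n → faceMap n m j h = fun _ => (1 : H)) :
    h = fun _ => (1 : H) := by
  funext q
  induction hw : q.weight using Nat.strong_induction_on generalizing q with
  | _ w ih =>
    obtain ⟨j, hj, hjn, hjq⟩ := Idx.exists_forall_ne_of_lt hmn q
    rw [← Idx.shiftUp_shiftDown j q hj hjn hjq] at hw ⊢
    exact eq_one_of_faceMap_eq_one (congrFun (hface j hjn) _)
      fun q' hq' => ih _ (hw ▸ hq') q' rfl

/-- in `K(H,m)`, for `n > m`, every `h ∈ H^{[n:m]}` all of whose faces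
`∂_j h` (0 ≤ j ≤ n) are trivial is itself trivial.  Hence `Z_n` contains only the
degenerate basepoint for `n > m`. -/
theorem KHm_spheres_trivial {H : Type*} [Group H] (m n : ℕ) (hm : 0 < m) (hmn : m < n)
    (h : Idx n m → H)
    (hface : ∀ j, j ≤ n → faceMap n m j h = fun _ => (1 : H)) :
    h = fun _ => (1 : H) :=
  KHm_spheres_trivial_general m n hmn h hface
end
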